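/- Suppose f ∈ C²(ℝ^d) with ‖∇²f(x)‖ ≤ M for all x, and 0 < α < 1/M. Then for every coordinate index i ∈ {1,…,d}, the one-step map φ_i : ℝ^d → ℝ^d defined by φ_i(x) := x − α e_i e_iᵀ ∇f(x) is a bijection of ℝ^d whose inverse is continuously differentiable (a C¹ diffeomorphism of ℝ^d). -/

import Mathlib

/-!
The step is `x ↦ x - h x` with `h x = α ∂ᵢf(x) eᵢ`. By the mean value inequality the
Hessian bound makes `∇f`, hence `h`, Lipschitz with constant `αM < 1`. A Lipschitz
perturbation of the identity with constant `< 1` is a homeomorphism, and its derivative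
`1 - Dh(x)` is invertible by the Neumann series because `‖Dh(x)‖ ≤ αM < 1`; the inverse
function theorem then makes the inverse as smooth as the map itself.
-/

open Filter Topology

noncomputable section

/-- The Hessian `∇²f(x)` of `f` at `x`, as a continuous linear map. -/
def hess (d : ℕ) (f : EuclideanSpace ℝ (Fin d) → ℝ) (x : EuclideanSpace ℝ (Fin d)) :
    EuclideanSpace ℝ (Fin d) →L[ℝ] EuclideanSpace ℝ (Fin d) :=
  fderiv ℝ (gradient f) x

open scoped NNReal

section IdSubLipschitz

variable {𝕜 : Type*} [NontriviallyNormedField 𝕜] {E : Type*} [NormedAddCommGroup E]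
  [NormedSpace 𝕜 E] {h : E → E} {K : ℝ≥0}

theorem LipschitzWith.approximatesLinearOn_id_sub (hlip : LipschitzWith K h) :
    ApproximatesLinearOn (fun x => x - h x) (ContinuousLinearMap.id 𝕜 E) Set.univ K := by
  refine (lipschitzOnWith_univ.2 ?_).approximatesLinearOn
  have hsub : (fun x => x - h x) - ⇑(ContinuousLinearMap.id 𝕜 E) = -h := by
    ext x
    simp
  exact hsub ▸ hlip.neg

theorem LipschitzWith.exists_contDiff_inverse_id_sub [CompleteSpace E] {n : WithTop ℕ∞}
    (hlip : LipschitzWith K h) (hK : K < 1) (hh : ContDiff 𝕜 n h) (hn : n ≠ 0) :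
    ∃ g : E → E, ContDiff 𝕜 n g ∧ Function.LeftInverse g (fun x => x - h x) ∧
      Function.RightInverse g (fun x => x - h x) := by
  have hc : Subsingleton E ∨
      K < ‖((ContinuousLinearEquiv.refl 𝕜 E).symm : E →L[𝕜] E)‖₊⁻¹ := by
    rcases subsingleton_or_nontrivial E with hE | hE
    · exact .inl hE
    · right
      simpa using hK
  let Φ : E ≃ₜ E :=
    (hlip.approximatesLinearOn_id_sub (𝕜 := 𝕜)).toHomeomorph (f' := .refl 𝕜 E) _ hc
  have hderiv : ∀ x, HasFDerivAt (fun x => x - h x)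
      (ContinuousLinearEquiv.ofUnit (Units.oneSub (fderiv 𝕜 h x)
        ((norm_fderiv_le_of_lipschitz 𝕜 hlip).trans_lt hK)) : E →L[𝕜] E) x := fun x =>
    (hasFDerivAt_id x).sub (hh.differentiable hn x).hasFDerivAt
  exact ⟨Φ.symm, Φ.contDiff_symm hderiv (contDiff_id.sub hh), Φ.symm_apply_apply,
    Φ.apply_symm_apply⟩

end IdSubLipschitz

theorem ContDiff.gradient {F : Type*} [NormedAddCommGroup F] [InnerProductSpace ℝ F]
    [CompleteSpace F] {f : F → ℝ} {n : WithTop ℕ∞} (hf : ContDiff ℝ (n + 1) f) :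
    ContDiff ℝ n (gradient f) :=
  (InnerProductSpace.toDual ℝ F).symm.contDiff.comp (hf.fderiv_right le_rfl)

theorem LipschitzWith.smul_single_apply {X ι : Type*} [PseudoMetricSpace X] [Fintype ι]
    [DecidableEq ι] {g : X → EuclideanSpace ℝ ι} {K : ℝ≥0} (hg : LipschitzWith K g) (c : ℝ≥0)
    (i : ι) :
    LipschitzWith (c * K) (fun x => (c * g x i) • EuclideanSpace.single i (1 : ℝ)) := by
  refine LipschitzWith.of_dist_le_mul fun x y => ?_
  calc dist ((c * g x i) • EuclideanSpace.single i (1 : ℝ))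
        ((c * g y i) • EuclideanSpace.single i (1 : ℝ))
      = c * dist (g x i) (g y i) := by
        rw [dist_eq_norm, ← sub_smul, norm_smul, PiLp.norm_single, norm_one, mul_one,
          ← mul_sub, norm_mul, Real.dist_eq, Real.norm_eq_abs, Real.norm_eq_abs,
          NNReal.abs_eq]
    _ ≤ c * (K * dist x y) := by
        gcongr
        exact (PiLp.dist_apply_le _ _ i).trans (hg.dist_le_mul x y)
    _ = (c * K : ℝ≥0) * dist x y := by
        push_cast
        ring

theorem rcgd_step_is_diffeomorphism_general
    {d : ℕ} (f : EuclideanSpace ℝ (Fin d) → ℝ) (M α : ℝ)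
    (hf : ContDiff ℝ 2 f)
    (hM : ∀ x, ‖hess d f x‖ ≤ M)
    (hα : 0 < α) (hα' : α < 1 / M) (i : Fin d) :
    ∃ g : EuclideanSpace ℝ (Fin d) → EuclideanSpace ℝ (Fin d),
      ContDiff ℝ 1 g ∧
      Function.LeftInverse g
        (fun x => x - (α * gradient f x i) • EuclideanSpace.single i (1 : ℝ)) ∧
      Function.RightInverse g
        (fun x => x - (α * gradient f x i) • EuclideanSpace.single i (1 : ℝ)) := by
  have hM0 : 0 < M := by
    by_contra! hM0
    linarith [one_div_nonpos.mpr hM0]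
  have hαM : α * M < 1 := (lt_div_iff₀ hM0).mp hα'
  have hgrad : ContDiff ℝ 1 (gradient f) := hf.gradient
  have hgrad_lip : LipschitzWith ⟨M, hM0.le⟩ (gradient f) :=
    lipschitzWith_of_nnnorm_fderiv_le (hgrad.differentiable one_ne_zero) hM
  have hstep_lip := hgrad_lip.smul_single_apply ⟨α, hα.le⟩ i
  have hstep_smooth :
      ContDiff ℝ 1 fun x => (α * gradient f x i) • EuclideanSpace.single i (1 : ℝ) :=
    (contDiff_const.mul ((EuclideanSpace.proj (𝕜 := ℝ) i).contDiff.comp hgrad)).smul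
      contDiff_const
  exact hstep_lip.exists_contDiff_inverse_id_sub (by exact_mod_cast hαM) hstep_smooth
    one_ne_zero

/-- For `0 < α < 1/M`, the one-step coordinate gradient descent map
`φ_i(x) = x − α e_i e_iᵀ ∇f(x)` is a bijection of `ℝ^d` with `C¹` inverse. -/
theorem rcgd_step_is_diffeomorphism
    {d : ℕ} (hd : 1 ≤ d) (f : EuclideanSpace ℝ (Fin d) → ℝ) (M α : ℝ)
    (hf : ContDiff ℝ 2 f)
    (hM : ∀ x, ‖hess d f x‖ ≤ M)
    (hα : 0 < α) (hα' : α < 1 / M) (i : Fin d) :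
    ∃ g : EuclideanSpace ℝ (Fin d) → EuclideanSpace ℝ (Fin d),
      ContDiff ℝ 1 g ∧
      Function.LeftInverse g
        (fun x => x - (α * gradient f x i) • EuclideanSpace.single i (1 : ℝ)) ∧
      Function.RightInverse g
        (fun x => x - (α * gradient f x i) • EuclideanSpace.single i (1 : ℝ)) :=
  rcgd_step_is_diffeomorphism_general f M α hf hM hα hα' i
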